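/- Discrete analogue of Proposition 3.2: in a discrete structural equation model, assume that for every topological order π of G, every m ∈ [d], and all i, j ∈ π[1:m] such that i is a sink of G^{π[1:m]} while j is not, one has I(V_j ; (V_l)_{l∈Des_j^{π[1:m]}} | (V_l)_{l∈W_j^{π[1:m]}}) > H(ε_j) − H(ε_i). Then for every topological order π of G and every m ∈ [d]: (a) for all i, j ∈ π[1:m] with i a sink of G^{π[1:m]} and j not a sink of G^{π[1:m]}, H(V_i | (V_l)_{l∈π[1:m], l≠i}) > H(V_j | (V_l)_{l∈π[1:m], l≠j}); consequently, (b) every i* ∈ π[1:m] maximizing i ↦ H(V_i | (V_l)_{l∈π[1:m], l≠i}) over π[1:m] is a sink of G^{π[1:m]}. -/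

import Mathlib

/-!
If the conditioning variables contain all parents of `i` but neither `i` nor any of its
descendants, they are functions of noises other than `ε i`, hence independent of it, and
`V i` is `ε i` shifted by a function of them; so `H(V_i | ·) = H(ε_i)`. For a sink `i` of the
prefix this gives `H(V_i | rest) = H(ε_i)`. For a non-sink `j`, splitting the rest into
non-descendants `W` and descendants `D` gives `H(V_j | rest) = H(ε_j) - I(V_j ; V_D | V_W)`,
which the hypothesis pushes below `H(ε_i)`. Since the last node of the prefix is a sink, a
maximizer cannot be a non-sink.
-/

open MeasureTheory

attribute [local instance] Classical.propDecidable

/-- Shannon entropy of a finite-valued random variable. -/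
noncomputable def entropy {Ω : Type*} [MeasurableSpace Ω] (P : Measure Ω)
    {T : Type*} [Fintype T] (X : Ω → T) : ℝ :=
  ∑ x : T, Real.negMulLog ((P (X ⁻¹' {x})).toReal)

/-- Conditional entropy H(Y|X) := H(X,Y) − H(X). -/
noncomputable def condEntropy {Ω : Type*} [MeasurableSpace Ω] (P : Measure Ω)
    {S T : Type*} [Fintype S] [Fintype T] (X : Ω → S) (Y : Ω → T) : ℝ :=
  entropy P (fun ω => (X ω, Y ω)) - entropy P X

/-- Conditional mutual information I(Y;Z|X) := H(Y|X) − H(Y|X,Z). -/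
noncomputable def condMutualInfo {Ω : Type*} [MeasurableSpace Ω] (P : Measure Ω)
    {S T U : Type*} [Fintype S] [Fintype T] [Fintype U]
    (X : Ω → S) (Y : Ω → T) (Z : Ω → U) : ℝ :=
  condEntropy P X Y - condEntropy P (fun ω => (X ω, Z ω)) Y


section Entropy

variable {Ω : Type*} [MeasurableSpace Ω] (P : Measure Ω)

lemma entropy_comp_of_injective {S T : Type*} [Fintype S] [Fintype T] (X : Ω → S) {g : S → T}
    (hg : Function.Injective g) :
    entropy P (fun ω => g (X ω)) = entropy P X := by
  refine (Fintype.sum_of_injective g hg _ _ (fun t ht => ?_) fun s => ?_).symm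
  · have hempty : (fun ω => g (X ω)) ⁻¹' {t} = ∅ :=
      Set.eq_empty_of_forall_notMem fun ω hω => ht ⟨X ω, hω⟩
    simp [hempty]
  · have hfiber : (fun ω => g (X ω)) ⁻¹' {g s} = X ⁻¹' {s} := by
      ext ω; simp [hg.eq_iff]
    rw [hfiber]

lemma condEntropy_comp_of_injective {S S' T : Type*} [Fintype S] [Fintype S'] [Fintype T]
    (X : Ω → S) (Y : Ω → T) {g : S → S'} (hg : Function.Injective g) :
    condEntropy P (fun ω => g (X ω)) Y = condEntropy P X Y := by
  have hg₂ : Function.Injective (Prod.map g id : S × T → S' × T) :=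
    hg.prodMap Function.injective_id
  unfold condEntropy
  rw [entropy_comp_of_injective P X hg,
    ← entropy_comp_of_injective P (fun ω => (X ω, Y ω)) hg₂]
  rfl

lemma condEntropy_pair_restrict_eq {ι T A : Type*} [DecidableEq ι] [Fintype T] [Fintype A]
    {R Q₁ Q₂ : ι → Prop} [Fintype {l // R l}] [Fintype {l // Q₁ l}] [Fintype {l // Q₂ l}]
    (h₁ : ∀ l, Q₁ l → R l) (h₂ : ∀ l, Q₂ l → R l) (hR : ∀ l, R l → Q₁ l ∨ Q₂ l)
    (V : ι → Ω → A) (Y : Ω → T) :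
    condEntropy P (fun ω => (fun l : {l // Q₁ l} => V l ω, fun l : {l // Q₂ l} => V l ω)) Y
      = condEntropy P (fun ω (l : {l // R l}) => V l ω) Y := by
  refine condEntropy_comp_of_injective P (fun ω (l : {l // R l}) => V l ω) Y
    (g := fun v =>
      (fun l : {l // Q₁ l} => v ⟨l, h₁ l l.2⟩, fun l : {l // Q₂ l} => v ⟨l, h₂ l l.2⟩))
    fun v v' h => funext fun l => ?_
  rcases hR l l.2 with hl | hl
  · exact congrFun (congrArg Prod.fst h) ⟨l, hl⟩
  · exact congrFun (congrArg Prod.snd h) ⟨l, hl⟩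

variable [IsProbabilityMeasure P]

lemma sum_measureReal_preimage_singleton_univ {S : Type*} [Fintype S] [MeasurableSpace S]
    [MeasurableSingletonClass S] {X : Ω → S} (hX : Measurable X) :
    ∑ s : S, P.real (X ⁻¹' {s}) = 1 := by
  rw [sum_measureReal_preimage_singleton _ fun s _ => hX (measurableSet_singleton s)]
  simp

lemma entropy_prod_of_indepFun {S T : Type*} [Fintype S] [Fintype T]
    [MeasurableSpace S] [MeasurableSpace T] [MeasurableSingletonClass S]
    [MeasurableSingletonClass T]
    {X : Ω → S} {Y : Ω → T} (hX : Measurable X) (hY : Measurable Y)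
    (hXY : ProbabilityTheory.IndepFun X Y P) :
    entropy P (fun ω => (X ω, Y ω)) = entropy P X + entropy P Y := by
  have hmul : ∀ s t, P.real ((fun ω => (X ω, Y ω)) ⁻¹' {(s, t)})
      = P.real (X ⁻¹' {s}) * P.real (Y ⁻¹' {t}) := by
    intro s t
    rw [← Set.singleton_prod_singleton, Set.mk_preimage_prod, measureReal_def, measureReal_def,
      measureReal_def, hXY.measure_inter_preimage_eq_mul _ _ (measurableSet_singleton s)
        (measurableSet_singleton t), ENNReal.toReal_mul]
  have hsumX := sum_measureReal_preimage_singleton_univ P hX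
  have hsumY := sum_measureReal_preimage_singleton_univ P hY
  simp only [entropy, ← measureReal_def, Fintype.sum_prod_type, hmul, Real.negMulLog_mul,
    Finset.sum_add_distrib, ← Finset.sum_mul, ← Finset.mul_sum, hsumX, hsumY, one_mul]

lemma condEntropy_eq_entropy_of_indepFun {S T B : Type*} [Fintype S] [Fintype T] [Fintype B]
    [MeasurableSpace S] [MeasurableSpace B] [MeasurableSingletonClass S]
    [MeasurableSingletonClass B] {X : Ω → S} {N : Ω → B} (hX : Measurable X) (hN : Measurable N)
    (hXN : ProbabilityTheory.IndepFun X N P) {φ : S → B → T}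
    (hφ : ∀ x, Function.Injective (φ x)) :
    condEntropy P X (fun ω => φ (X ω) (N ω)) = entropy P N := by
  have hinj : Function.Injective (fun p : S × B => (p.1, φ p.1 p.2)) := by
    rintro ⟨x, n⟩ ⟨x', n'⟩ h
    obtain ⟨rfl, h⟩ := Prod.mk.inj h
    exact Prod.ext rfl (hφ x h)
  unfold condEntropy
  rw [entropy_comp_of_injective P (fun ω => (X ω, N ω)) hinj,
    entropy_prod_of_indepFun P hX hN hXN]
  ring

end Entropy

section StructuralEquations

open Relation ProbabilityTheory

variable {ι Ω A : Type*} {E : ι → ι → Prop} {f : (i : ι) → ({j // E j i} → A) → A}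
  {ε V : ι → Ω → A}

lemma exists_eq_comp_noise [Add A] (hwf : WellFounded E)
    (hV : ∀ i ω, V i ω = f i (fun j => V j.1 ω) + ε i ω) {K : Finset ι}
    (hK : ∀ k ∈ K, ∀ p, E p k → p ∈ K) :
    ∀ l ∈ K, ∃ g : (K → A) → A, ∀ ω, V l ω = g (fun k => ε k ω) := by
  intro l
  induction l using hwf.induction with
  | _ l ih =>
    intro hl
    choose g hg using fun p : {p // E p l} => ih p p.2 (hK l hl p p.2)
    refine ⟨fun e => f l (fun p => g p e) + e ⟨l, hl⟩, fun ω => ?_⟩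
    simp only [hV l ω, ← hg]

lemma condEntropy_eq_entropy_noise [Fintype ι] [DecidableEq ι] [MeasurableSpace Ω]
    (P : Measure Ω) [IsProbabilityMeasure P] [Fintype A] [Add A] [IsLeftCancelAdd A]
    [MeasurableSpace A] [MeasurableSingletonClass A] (hwf : WellFounded E)
    (hV : ∀ i ω, V i ω = f i (fun j => V j.1 ω) + ε i ω) (hε : ∀ i, Measurable (ε i))
    (hindep : iIndepFun ε P) {Q : ι → Prop} [Fintype {l // Q l}] {i : ι}
    (hpar : ∀ p, E p i → Q p) (hQ : ∀ l, Q l → ¬ ReflTransGen E i l) :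
    condEntropy P (fun ω (l : {l // Q l}) => V l ω) (V i) = entropy P (ε i) := by
  let K : Finset ι := Finset.univ.filter fun k => ∃ l, Q l ∧ ReflTransGen E k l
  have hK : ∀ k ∈ K, ∀ p, E p k → p ∈ K := by
    simp only [K, Finset.mem_filter, Finset.mem_univ, true_and]
    rintro k ⟨l, hl, hkl⟩ p hpk
    exact ⟨l, hl, hkl.head hpk⟩
  have hiK : i ∉ K := by
    simpa only [K, Finset.mem_filter, Finset.mem_univ, true_and, not_exists, not_and] using hQ
  choose g hg using fun l : {l // Q l} =>
    exists_eq_comp_noise hwf hV hK l (by simpa [K] using ⟨l, l.2, .refl⟩)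
  let G : (K → A) → {l // Q l} → A := fun e l => g l e
  have hG : Measurable G := .of_discrete
  set X := fun ω (l : {l // Q l}) => V l ω
  have hX : X = fun ω => G (fun k : K => ε k ω) := funext fun ω => funext fun l => hg l ω
  have hXε : IndepFun X (ε i) P := by
    rw [hX]
    exact (hindep.indepFun_finset K {i} (Finset.disjoint_singleton_right.2 hiK) hε).comp hG
      (measurable_pi_apply (⟨i, Finset.mem_singleton_self i⟩ : ({i} : Finset ι)))
  have hXmeas : Measurable X := by
    rw [hX]
    exact hG.comp (measurable_pi_lambda _ fun k => hε k)
  have hVi : V i = fun ω => f i (fun p => X ω ⟨p, hpar p p.2⟩) + ε i ω := funext (hV i)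
  rw [hVi]
  exact condEntropy_eq_entropy_of_indepFun P hXmeas (hε i) hXε
    (φ := fun x a => f i (fun p => x ⟨p, hpar p p.2⟩) + a) fun x => add_right_injective _

end StructuralEquations

section TopologicalOrder

open Relation ProbabilityTheory

variable {d : ℕ} {E : Fin d → Fin d → Prop} {π : Equiv.Perm (Fin d)}

lemma wellFounded_of_topologicalOrder (hπ : ∀ a b, TransGen E a b → π.symm a < π.symm b) :
    WellFounded E :=
  Subrelation.wf (fun h => hπ _ _ (.single h)) (InvImage.wf π.symm wellFounded_lt)

lemma not_transGen_self_of_topologicalOrder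
    (hπ : ∀ a b, TransGen E a b → π.symm a < π.symm b) (a : Fin d) : ¬ TransGen E a a :=
  fun h => lt_irrefl _ (hπ a a h)

lemma not_reflTransGen_of_isSink (hπ : ∀ a b, TransGen E a b → π.symm a < π.symm b)
    {m i l : Fin d} (hsink : ∀ l, π.symm l ≤ m → ¬ E i l) (hl : π.symm l ≤ m) (hli : l ≠ i) :
    ¬ ReflTransGen E i l := by
  rw [reflTransGen_iff_eq_or_transGen, TransGen.head'_iff]
  rintro (rfl | ⟨c, hic, hcl⟩)
  · exact hli rfl
  · have hcl' : π.symm c ≤ π.symm l := by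
      rcases reflTransGen_iff_eq_or_transGen.1 hcl with rfl | h
      exacts [le_rfl, (hπ c l h).le]
    exact hsink c (hcl'.trans hl) hic

variable {Ω A : Type*} [MeasurableSpace Ω] (P : Measure Ω) [IsProbabilityMeasure P]
  [Fintype A] [AddCommGroup A] [MeasurableSpace A] [MeasurableSingletonClass A]
  {ε V : Fin d → Ω → A} {f : (i : Fin d) → ({j : Fin d // E j i} → A) → A}

lemma condEntropy_prefix_eq_entropy_noise_of_isSink
    (hπ : ∀ a b, TransGen E a b → π.symm a < π.symm b)
    (hV : ∀ i ω, V i ω = f i (fun j => V j.1 ω) + ε i ω) (hε : ∀ i, Measurable (ε i))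
    (hindep : iIndepFun ε P) {m i : Fin d} (hi : π.symm i ≤ m)
    (hsink : ∀ l, π.symm l ≤ m → ¬ E i l) :
    condEntropy P (fun ω (l : {l : Fin d // π.symm l ≤ m ∧ l ≠ i}) => V l.1 ω) (V i)
      = entropy P (ε i) := by
  refine condEntropy_eq_entropy_noise P (wellFounded_of_topologicalOrder hπ) hV hε hindep
    (Q := fun l => π.symm l ≤ m ∧ l ≠ i) (fun p hp => ⟨(hπ p i (.single hp)).le.trans hi, ?_⟩)
    fun l hl => not_reflTransGen_of_isSink hπ hsink hl.1 hl.2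
  rintro rfl
  exact not_transGen_self_of_topologicalOrder hπ p (.single hp)

lemma condEntropy_prefix_eq_entropy_noise_sub_condMutualInfo
    (hπ : ∀ a b, TransGen E a b → π.symm a < π.symm b)
    (hV : ∀ i ω, V i ω = f i (fun j => V j.1 ω) + ε i ω) (hε : ∀ i, Measurable (ε i))
    (hindep : iIndepFun ε P) {m j : Fin d} (hj : π.symm j ≤ m) :
    condEntropy P (fun ω (l : {l : Fin d // π.symm l ≤ m ∧ l ≠ j}) => V l.1 ω) (V j)
      = entropy P (ε j) - condMutualInfo P
          (fun ω (l : {l : Fin d // (π.symm l ≤ m ∧ l ≠ j) ∧ ¬ TransGen E j l}) => V l.1 ω)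
          (V j) (fun ω (l : {l : Fin d // π.symm l ≤ m ∧ TransGen E j l}) => V l.1 ω) := by
  have hacyc := not_transGen_self_of_topologicalOrder hπ
  have hW : condEntropy P
      (fun ω (l : {l : Fin d // (π.symm l ≤ m ∧ l ≠ j) ∧ ¬ TransGen E j l}) => V l.1 ω) (V j)
      = entropy P (ε j) := by
    refine condEntropy_eq_entropy_noise P (wellFounded_of_topologicalOrder hπ) hV hε hindep
      (Q := fun l => (π.symm l ≤ m ∧ l ≠ j) ∧ ¬ TransGen E j l)
      (fun p hp => ⟨⟨(hπ p j (.single hp)).le.trans hj, ?_⟩, fun h => hacyc j (h.tail hp)⟩)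
      fun l hl h => ?_
    · rintro rfl
      exact hacyc p (.single hp)
    · rcases reflTransGen_iff_eq_or_transGen.1 h with rfl | h
      exacts [hl.1.2 rfl, hl.2 h]
  have hsplit := condEntropy_pair_restrict_eq P
    (R := fun l => π.symm l ≤ m ∧ l ≠ j)
    (Q₁ := fun l => (π.symm l ≤ m ∧ l ≠ j) ∧ ¬ TransGen E j l)
    (Q₂ := fun l => π.symm l ≤ m ∧ TransGen E j l) (fun l h => h.1)
    (fun l h => ⟨h.1, fun hlj => hacyc j (hlj ▸ h.2)⟩)
    (fun l h => (em (TransGen E j l)).symm.imp (⟨h, ·⟩) (⟨h.1, ·⟩)) V (V j)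
  rw [condMutualInfo, hsplit, hW]
  ring

end TopologicalOrder

theorem stmt11_general {d : ℕ} (E : Fin d → Fin d → Prop)
    {Ω A : Type*} [MeasurableSpace Ω] (P : Measure Ω) [IsProbabilityMeasure P]
    [Fintype A] [AddCommGroup A] [MeasurableSpace A] [MeasurableSingletonClass A]
    (ε : Fin d → Ω → A) (hεmeas : ∀ i, Measurable (ε i))
    (hindep : ProbabilityTheory.iIndepFun ε P)
    (f : (i : Fin d) → ({j : Fin d // E j i} → A) → A)
    (V : Fin d → Ω → A)
    (hV : ∀ i ω, V i ω = f i (fun j => V j.1 ω) + ε i ω)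
    (hyp : ∀ σ : Equiv.Perm (Fin d),
      (∀ a b, Relation.TransGen E a b → σ.symm a < σ.symm b) →
      ∀ m : Fin d, ∀ i j : Fin d, σ.symm i ≤ m → σ.symm j ≤ m →
        (∀ l, σ.symm l ≤ m → ¬ E i l) →
        (∃ l, σ.symm l ≤ m ∧ E j l) →
        entropy P (ε j) - entropy P (ε i)
          < condMutualInfo P
              (fun ω =>
                fun l : {l : Fin d // (σ.symm l ≤ m ∧ l ≠ j) ∧ ¬ Relation.TransGen E j l} =>
                  V l.1 ω)
              (V j)
              (fun ω => fun l : {l : Fin d // σ.symm l ≤ m ∧ Relation.TransGen E j l} =>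
                V l.1 ω))
    :
    ∀ π : Equiv.Perm (Fin d),
      (∀ a b, Relation.TransGen E a b → π.symm a < π.symm b) →
      ∀ m : Fin d,
        (∀ i j : Fin d, π.symm i ≤ m → π.symm j ≤ m →
          (∀ l, π.symm l ≤ m → ¬ E i l) →
          (∃ l, π.symm l ≤ m ∧ E j l) →
          condEntropy P (fun ω => fun l : {l : Fin d // π.symm l ≤ m ∧ l ≠ j} => V l.1 ω) (V j)
            < condEntropy P (fun ω => fun l : {l : Fin d // π.symm l ≤ m ∧ l ≠ i} => V l.1 ω)
                (V i))
        ∧ (∀ istar : Fin d, π.symm istar ≤ m →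
            (∀ i : Fin d, π.symm i ≤ m →
              condEntropy P (fun ω => fun l : {l : Fin d // π.symm l ≤ m ∧ l ≠ i} => V l.1 ω)
                  (V i)
                ≤ condEntropy P
                    (fun ω => fun l : {l : Fin d // π.symm l ≤ m ∧ l ≠ istar} => V l.1 ω)
                    (V istar)) →
            ∀ l, π.symm l ≤ m → ¬ E istar l) := by
  intro π hπ m
  have sink_lt_nonSink : ∀ i j : Fin d, π.symm i ≤ m → π.symm j ≤ m →
      (∀ l, π.symm l ≤ m → ¬ E i l) → (∃ l, π.symm l ≤ m ∧ E j l) →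
      condEntropy P (fun ω => fun l : {l : Fin d // π.symm l ≤ m ∧ l ≠ j} => V l.1 ω) (V j)
        < condEntropy P (fun ω => fun l : {l : Fin d // π.symm l ≤ m ∧ l ≠ i} => V l.1 ω)
            (V i) := by
    intro i j hi hj hsink hj_nonSink
    rw [condEntropy_prefix_eq_entropy_noise_of_isSink P hπ hV hεmeas hindep hi hsink,
      condEntropy_prefix_eq_entropy_noise_sub_condMutualInfo P hπ hV hεmeas hindep hj]
    linarith [hyp π hπ m i j hi hj hsink hj_nonSink]
  refine ⟨sink_lt_nonSink, fun istar hstar hmax l hl hE => ?_⟩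
  have hlast_sink : ∀ l, π.symm l ≤ m → ¬ E (π m) l := fun l hl hE =>
    (hπ _ _ (.single hE)).not_ge (by simpa using hl)
  have hlast : π.symm (π m) ≤ m := by simp
  exact (hmax (π m) hlast).not_gt (sink_lt_nonSink _ _ hlast hstar hlast_sink ⟨l, hl, hE⟩)

/-- Discrete analogue of Proposition 3.2: under the OLEM assumption, for every
topological order `π` and every `m`, (a) every sink of `G^{π[1:m]}` has strictly
larger conditional entropy given the other prefix variables than every
non-sink, and consequently (b) every maximizer of the conditional entropy over
`π[1:m]` is a sink of `G^{π[1:m]}`. -/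
theorem stmt11 {d : ℕ} (E : Fin d → Fin d → Prop)
    (hacyc : ∀ i, ¬ Relation.TransGen E i i)
    {Ω A : Type*} [MeasurableSpace Ω] (P : Measure Ω) [IsProbabilityMeasure P]
    [Fintype A] [AddCommGroup A] [MeasurableSpace A] [MeasurableSingletonClass A]
    (ε : Fin d → Ω → A) (hεmeas : ∀ i, Measurable (ε i))
    (hindep : ProbabilityTheory.iIndepFun ε P)
    (f : (i : Fin d) → ({j : Fin d // E j i} → A) → A)
    (V : Fin d → Ω → A) (hVmeas : ∀ i, Measurable (V i))
    (hV : ∀ i ω, V i ω = f i (fun j => V j.1 ω) + ε i ω)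
    (hyp : ∀ σ : Equiv.Perm (Fin d),
      (∀ a b, Relation.TransGen E a b → σ.symm a < σ.symm b) →
      ∀ m : Fin d, ∀ i j : Fin d, σ.symm i ≤ m → σ.symm j ≤ m →
        (∀ l, σ.symm l ≤ m → ¬ E i l) →
        (∃ l, σ.symm l ≤ m ∧ E j l) →
        entropy P (ε j) - entropy P (ε i)
          < condMutualInfo P
              (fun ω =>
                fun l : {l : Fin d // (σ.symm l ≤ m ∧ l ≠ j) ∧ ¬ Relation.TransGen E j l} =>
                  V l.1 ω)
              (V j)
              (fun ω => fun l : {l : Fin d // σ.symm l ≤ m ∧ Relation.TransGen E j l} =>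
                V l.1 ω))
    :
    ∀ π : Equiv.Perm (Fin d),
      (∀ a b, Relation.TransGen E a b → π.symm a < π.symm b) →
      ∀ m : Fin d,
        (∀ i j : Fin d, π.symm i ≤ m → π.symm j ≤ m →
          (∀ l, π.symm l ≤ m → ¬ E i l) →
          (∃ l, π.symm l ≤ m ∧ E j l) →
          condEntropy P (fun ω => fun l : {l : Fin d // π.symm l ≤ m ∧ l ≠ j} => V l.1 ω) (V j)
            < condEntropy P (fun ω => fun l : {l : Fin d // π.symm l ≤ m ∧ l ≠ i} => V l.1 ω)
                (V i))
        ∧ (∀ istar : Fin d, π.symm istar ≤ m →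
            (∀ i : Fin d, π.symm i ≤ m →
              condEntropy P (fun ω => fun l : {l : Fin d // π.symm l ≤ m ∧ l ≠ i} => V l.1 ω)
                  (V i)
                ≤ condEntropy P
                    (fun ω => fun l : {l : Fin d // π.symm l ≤ m ∧ l ≠ istar} => V l.1 ω)
                    (V istar)) →
            ∀ l, π.symm l ≤ m → ¬ E istar l) :=
  stmt11_general E P ε hεmeas hindep f V hV hyp
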